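/- arXiv:1409.8222 — 3 statements merged into one kernel-verified Lean document; each statement's English description precedes it below -/
import Mathlib

section
/- If a finitely generated group G has bounded conjugacy width with respect to some finite generating set, then its abelianisation G/[G,G] is finite. -/
/-!
Conjugate elements have the same image in the abelianisation, so every element of
`Abelianization G` is a product of at most `N` images of elements of `X ∪ X⁻¹`. There are only
finitely many such products.
-/

theorem Finite.of_forall_eq_list_prod {M : Type*} [Monoid M] {S : Set M} (hS : S.Finite) (N : ℕ)
    (h : ∀ m : M, ∃ l : List M, l.length ≤ N ∧ (∀ y ∈ l, y ∈ S) ∧ m = l.prod) : Finite M := by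
  have : Finite S := hS.to_subtype
  have : Finite {l : List S // l.length ≤ N} := (List.finite_length_le S N).to_subtype
  refine Finite.of_surjective (fun l : {l : List S // l.length ≤ N} ↦ (l.1.map (↑)).prod) ?_
  intro m
  obtain ⟨l, hlen, hlS, rfl⟩ := h m
  lift l to List S using hlS
  exact ⟨⟨l, by simpa using hlen⟩, rfl⟩

theorem Abelianization.of_conj {G : Type*} [Group G] (h x : G) : of (h⁻¹ * x * h) = of x := by
  simp [mul_right_comm]

theorem bcw_implies_finite_abelianization_general {G : Type*} [Group G]
    (X : Set G) (hX : X.Finite) (N : ℕ)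
    (hbcw : ∀ g : G, ∃ l : List G, l.length ≤ N ∧
      (∀ y ∈ l, ∃ x ∈ X, ∃ h : G, y = h⁻¹ * x * h ∨ y = h⁻¹ * x⁻¹ * h) ∧
      g = l.prod) :
    Finite (Abelianization G) := by
  refine Finite.of_forall_eq_list_prod ((hX.union hX.inv).image Abelianization.of) N fun a ↦ ?_
  obtain ⟨g, rfl⟩ := QuotientGroup.mk_surjective a
  obtain ⟨l, hlen, hconj, rfl⟩ := hbcw g
  refine ⟨l.map Abelianization.of, by simpa using hlen, ?_, map_list_prod Abelianization.of l⟩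
  simp only [List.mem_map]
  rintro _ ⟨y, hy, rfl⟩
  obtain ⟨x, hx, h, rfl | rfl⟩ := hconj y hy
  · exact ⟨x, .inl hx, (Abelianization.of_conj h x).symm⟩
  · exact ⟨x⁻¹, .inr (Set.inv_mem_inv.mpr hx), (Abelianization.of_conj h x⁻¹).symm⟩

/-- If a finitely generated group has bounded conjugacy width with respect to some finite
generating set, then its abelianisation is finite. -/
theorem bcw_implies_finite_abelianization {G : Type*} [Group G]
    (X : Set G) (hX : X.Finite) (hgen : Subgroup.closure X = ⊤) (N : ℕ)
    (hbcw : ∀ g : G, ∃ l : List G, l.length ≤ N ∧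
      (∀ y ∈ l, ∃ x ∈ X, ∃ h : G, y = h⁻¹ * x * h ∨ y = h⁻¹ * x⁻¹ * h) ∧
      g = l.prod) :
    Finite (Abelianization G) :=
  bcw_implies_finite_abelianization_general X hX N hbcw
end

section
/- A finitely generated infinite nilpotent group does not have bounded conjugacy width. -/
/-!
In an abelian quotient every conjugate of `x^{±1}` becomes `x^{±1}`, so bounded conjugacy width
with respect to a finite set `X` makes every element of the abelianisation a product of at most
`N` elements of a fixed finite set; hence the abelianisation is finite. A finitely generated
nilpotent group with finite abelianisation is finite, by induction on the nilpotency class: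
`G ⧸ center G` inherits both hypotheses, so it is finite; then `G` has only finitely many
commutators, the commutator subgroup is finite by Schur's theorem, and so is `G`.
-/

open Subgroup
open scoped commutatorElement

def HasBoundedConjugacyWidth {G : Type*} [Group G] (X : Set G) : Prop :=
  ∃ N : ℕ, ∀ g : G, ∃ l : List G, l.length ≤ N ∧
    (∀ y ∈ l, ∃ x ∈ X, ∃ h : G, y = h⁻¹ * x * h ∨ y = h⁻¹ * x⁻¹ * h) ∧ g = l.prod

theorem Set.Finite.setOf_list_prod {M : Type*} [Monoid M] {S : Set M} (hS : S.Finite)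
    (N : ℕ) : {g : M | ∃ l : List M, l.length ≤ N ∧ (∀ y ∈ l, y ∈ S) ∧ g = l.prod}.Finite := by
  have := hS.to_subtype
  refine ((List.finite_length_le S N).image fun l => (l.map (↑)).prod).subset ?_
  rintro _ ⟨l, hlen, hS, rfl⟩
  lift l to List S using hS
  exact ⟨l, by simpa using hlen, rfl⟩

section

variable {G : Type*} [Group G]

theorem Abelianization.of_surjective :
    Function.Surjective (Abelianization.of : G →* Abelianization G) :=
  QuotientGroup.mk_surjective

theorem Abelianization.map_surjective {H : Type*} [Group H] {f : G →* H}
    (hf : Function.Surjective f) : Function.Surjective (Abelianization.map f) := by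
  intro a
  obtain ⟨h, rfl⟩ := Abelianization.of_surjective a
  obtain ⟨g, rfl⟩ := hf h
  exact ⟨Abelianization.of g, Abelianization.map_of f g⟩

theorem HasBoundedConjugacyWidth.finite_abelianization {X : Set G}
    (hbcw : HasBoundedConjugacyWidth X) (hX : X.Finite) : Finite (Abelianization G) := by
  obtain ⟨N, hN⟩ := hbcw
  refine Set.finite_univ_iff.mp
    ((((hX.union hX.inv).image Abelianization.of).setOf_list_prod N).subset ?_)
  intro a _
  obtain ⟨g, rfl⟩ := Abelianization.of_surjective a
  obtain ⟨l, hlen, hconj, rfl⟩ := hN g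
  refine ⟨l.map Abelianization.of, by simpa using hlen, ?_, map_list_prod _ _⟩
  simp only [List.mem_map]
  rintro - ⟨y, hy, rfl⟩
  obtain ⟨x, hx, h, rfl | rfl⟩ := hconj y hy
  · exact ⟨x, Or.inl hx, by simp⟩
  · exact ⟨x⁻¹, Or.inr (Set.inv_mem_inv.mpr hx), by simp⟩

theorem commutatorElement_mul_of_mem_center (a b : G) {z w : G} (hz : z ∈ center G)
    (hw : w ∈ center G) : ⁅a * z, b * w⁆ = ⁅a, b⁆ := by
  rw [mem_center_iff] at hz hw
  calc ⁅a * z, b * w⁆ = a * (z * (b * w)) * z⁻¹ * a⁻¹ * w⁻¹ * b⁻¹ := by group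
    _ = a * b * (w * a⁻¹) * w⁻¹ * b⁻¹ := by rw [← hz]; group
    _ = ⁅a, b⁆ := by rw [← hw]; group

theorem finite_commutatorSet_of_finite_quotient_center [Finite (G ⧸ center G)] :
    Finite (commutatorSet G) := by
  refine (Set.Finite.subset (Set.finite_range
    fun p : (G ⧸ center G) × (G ⧸ center G) => ⁅p.1.out, p.2.out⁆) ?_).to_subtype
  rintro - ⟨a, b, rfl⟩
  refine ⟨(a, b), ?_⟩
  obtain ⟨⟨z, hz⟩, hza⟩ := QuotientGroup.mk_out_eq_mul (center G) a
  obtain ⟨⟨w, hw⟩, hwb⟩ := QuotientGroup.mk_out_eq_mul (center G) b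
  dsimp only
  rw [hza, hwb]
  exact commutatorElement_mul_of_mem_center a b hz hw

end

theorem finite_of_isNilpotent_of_finite_abelianization (G : Type*) [Group G]
    [Group.IsNilpotent G] [Group.FG G] [Finite (Abelianization G)] : Finite G := by
  refine Group.nilpotent_center_quotient_ind
    (P := fun G _ _ => Group.FG G → Finite (Abelianization G) → Finite G) G
    (fun _ _ _ _ _ => Finite.of_subsingleton) (fun G _ _ ih _ _ => ?_) ‹_› ‹_›
  have : Finite (Abelianization (G ⧸ center G)) :=
    Finite.of_surjective _ (Abelianization.map_surjective (QuotientGroup.mk'_surjective _))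
  have : Finite (G ⧸ center G) := ih inferInstance this
  have : Finite (commutatorSet G) := finite_commutatorSet_of_finite_quotient_center
  have : Finite (G ⧸ commutator G) := ‹Finite (Abelianization G)›
  -- `Finite (commutator G)` is Schur's theorem, an instance given `Finite (commutatorSet G)`.
  exact Finite.of_subgroup_quotient (commutator G)

theorem infinite_nilpotent_not_bcw_general {G : Type*} [Group G] [Group.FG G]
    [Group.IsNilpotent G] [Infinite G]
    (X : Set G) (hX : X.Finite) :
    ¬ ∃ N : ℕ, ∀ g : G, ∃ l : List G, l.length ≤ N ∧
      (∀ y ∈ l, ∃ x ∈ X, ∃ h : G, y = h⁻¹ * x * h ∨ y = h⁻¹ * x⁻¹ * h) ∧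
      g = l.prod := fun hbcw =>
  have := HasBoundedConjugacyWidth.finite_abelianization hbcw hX
  have := finite_of_isNilpotent_of_finite_abelianization G
  not_finite G

/-- A finitely generated infinite nilpotent group does not have bounded conjugacy width. -/
theorem infinite_nilpotent_not_bcw {G : Type*} [Group G] [Group.FG G]
    [Group.IsNilpotent G] [Infinite G]
    (X : Set G) (hX : X.Finite) (hgen : Subgroup.closure X = ⊤) :
    ¬ ∃ N : ℕ, ∀ g : G, ∃ l : List G, l.length ≤ N ∧
      (∀ y ∈ l, ∃ x ∈ X, ∃ h : G, y = h⁻¹ * x * h ∨ y = h⁻¹ * x⁻¹ * h) ∧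
      g = l.prod :=
  infinite_nilpotent_not_bcw_general X hX
end

section
/- If a finitely generated group H has bounded conjugacy width and G is a finitely generated group containing H as a finite index subgroup, then G has bounded conjugacy width (with respect to any finite generating set of G that contains a generating set giving the elements of H, appropriately: there exists N such that every element of G is a product of at most N conjugates of generators of G and their inverses). -/
/-!
Write `g ∈ G` as `t * h` with `t` in a finite left transversal `T` of `H` and `h ∈ H`. Since `X`
generates `G`, the finitely many elements of `S ∪ T` are products of at most `M` conjugates of
elements of `X ∪ X⁻¹`, for a single `M`. Such products are stable under inversion and conjugation,
so every conjugate of an element of `S ∪ S⁻¹` is one as well; hence `h`, a product of at most `NH`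
of those, is a product of at most `NH * M` conjugates of elements of `X ∪ X⁻¹`, and `g = t * h`
of at most `M + NH * M`.
-/

open Group

section

variable {G : Type*} [Group G]

def IsProdOfAtMost (C : Set G) (n : ℕ) (g : G) : Prop :=
  ∃ l : List G, l.length ≤ n ∧ (∀ y ∈ l, y ∈ C) ∧ g = l.prod

namespace IsProdOfAtMost

variable {C D : Set G} {m n : ℕ} {a b g : G}

theorem mono (hg : IsProdOfAtMost C m g) (hmn : m ≤ n) : IsProdOfAtMost C n g :=
  let ⟨l, hl, hlC, hlg⟩ := hg
  ⟨l, hl.trans hmn, hlC, hlg⟩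

theorem one : IsProdOfAtMost C 0 1 :=
  ⟨[], le_rfl, by simp, rfl⟩

theorem of_mem (hg : g ∈ C) : IsProdOfAtMost C 1 g :=
  ⟨[g], le_rfl, by simpa, by simp⟩

theorem mul (ha : IsProdOfAtMost C m a) (hb : IsProdOfAtMost C n b) :
    IsProdOfAtMost C (m + n) (a * b) := by
  obtain ⟨la, hla, hlaC, rfl⟩ := ha
  obtain ⟨lb, hlb, hlbC, rfl⟩ := hb
  refine ⟨la ++ lb, by simp only [List.length_append]; omega, ?_, List.prod_append.symm⟩
  simpa [or_imp, forall_and] using ⟨hlaC, hlbC⟩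

theorem list_prod {l : List G} (h : ∀ y ∈ l, IsProdOfAtMost C m y) :
    IsProdOfAtMost C (l.length * m) l.prod := by
  induction l with
  | nil => simpa using one
  | cons a l ih =>
    rw [List.forall_mem_cons] at h
    simpa [add_mul, add_comm] using h.1.mul (ih h.2)

theorem trans (hg : IsProdOfAtMost D n g) (hD : ∀ d ∈ D, IsProdOfAtMost C m d) :
    IsProdOfAtMost C (n * m) g := by
  obtain ⟨l, hl, hlD, rfl⟩ := hg
  exact (list_prod fun y hy => hD y (hlD y hy)).mono (Nat.mul_le_mul_right m hl)

theorem inv (hC : ∀ c ∈ C, c⁻¹ ∈ C) (hg : IsProdOfAtMost C n g) : IsProdOfAtMost C n g⁻¹ := by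
  obtain ⟨l, hl, hlC, rfl⟩ := hg
  refine ⟨(l.map (·⁻¹)).reverse, by simpa using hl, ?_, List.prod_inv_reverse l⟩
  simp only [List.mem_reverse, List.mem_map]
  rintro _ ⟨c, hc, rfl⟩
  exact hC c (hlC c hc)

theorem conj (hC : ∀ c ∈ C, ∀ t : G, t * c * t⁻¹ ∈ C) (hg : IsProdOfAtMost C n g) (t : G) :
    IsProdOfAtMost C n (t * g * t⁻¹) := by
  obtain ⟨l, hl, hlC, rfl⟩ := hg
  refine ⟨l.map (MulAut.conj t), by simpa using hl, ?_, map_list_prod (MulAut.conj t) l⟩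
  simp only [List.mem_map, MulAut.conj_apply]
  rintro _ ⟨c, hc, rfl⟩
  exact hC c (hlC c hc) t

end IsProdOfAtMost

theorem exists_isProdOfAtMost_of_mem_closure {C : Set G} (hC : ∀ c ∈ C, c⁻¹ ∈ C) {g : G}
    (hg : g ∈ Subgroup.closure C) : ∃ n, IsProdOfAtMost C n g := by
  induction hg using Subgroup.closure_induction with
  | mem c hc => exact ⟨1, .of_mem hc⟩
  | one => exact ⟨0, .one⟩
  | mul a b _ _ ha hb =>
    obtain ⟨m, hm⟩ := ha
    obtain ⟨n, hn⟩ := hb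
    exact ⟨m + n, hm.mul hn⟩
  | inv a _ ha =>
    obtain ⟨n, hn⟩ := ha
    exact ⟨n, hn.inv hC⟩

theorem exists_isProdOfAtMost_of_finite {C T : Set G} (hT : T.Finite)
    (h : ∀ t ∈ T, ∃ n, IsProdOfAtMost C n t) : ∃ M, ∀ t ∈ T, IsProdOfAtMost C M t := by
  choose! n hn using h
  exact ⟨hT.toFinset.sup n, fun t ht => (hn t ht).mono (Finset.le_sup (hT.mem_toFinset.2 ht))⟩

theorem Group.mem_conjugatesOfSet_union_inv {X : Set G} {y : G} :
    y ∈ conjugatesOfSet (X ∪ X⁻¹) ↔ ∃ x ∈ X, ∃ t : G, y = t⁻¹ * x * t ∨ y = t⁻¹ * x⁻¹ * t := by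
  simp only [mem_conjugatesOfSet_iff, isConj_iff, Set.mem_union, Set.mem_inv]
  constructor
  · rintro ⟨a, ha | ha, c, rfl⟩
    · exact ⟨a, ha, c⁻¹, .inl (by group)⟩
    · exact ⟨a⁻¹, ha, c⁻¹, .inr (by group)⟩
  · rintro ⟨x, hx, t, rfl | rfl⟩
    · exact ⟨x, .inl hx, t⁻¹, by group⟩
    · exact ⟨x⁻¹, .inr (by simpa), t⁻¹, by group⟩

theorem Group.inv_mem_conjugatesOfSet_union_inv {X : Set G} {y : G}
    (hy : y ∈ conjugatesOfSet (X ∪ X⁻¹)) : y⁻¹ ∈ conjugatesOfSet (X ∪ X⁻¹) := by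
  obtain ⟨x, hx, t, rfl | rfl⟩ := mem_conjugatesOfSet_union_inv.1 hy
  · exact mem_conjugatesOfSet_union_inv.2 ⟨x, hx, t, .inr (by group)⟩
  · exact mem_conjugatesOfSet_union_inv.2 ⟨x, hx, t, .inl (by group)⟩

theorem IsProdOfAtMost.of_mem_conjugatesOfSet_union_inv {C S : Set G} {M : ℕ} {y : G}
    (hCinv : ∀ c ∈ C, c⁻¹ ∈ C) (hCconj : ∀ c ∈ C, ∀ t : G, t * c * t⁻¹ ∈ C)
    (hS : ∀ s ∈ S, IsProdOfAtMost C M s) (hy : y ∈ conjugatesOfSet (S ∪ S⁻¹)) :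
    IsProdOfAtMost C M y := by
  obtain ⟨a, ha, hay⟩ := mem_conjugatesOfSet_iff.1 hy
  obtain ⟨c, rfl⟩ := isConj_iff.1 hay
  refine .conj hCconj ?_ c
  rcases ha with ha | ha
  · exact hS a ha
  · simpa using (hS a⁻¹ ha).inv hCinv

theorem Subgroup.exists_finite_forall_exists_inv_mul_mem (H : Subgroup G) [H.FiniteIndex] :
    ∃ T : Set G, T.Finite ∧ ∀ g : G, ∃ t ∈ T, t⁻¹ * g ∈ H := by
  have := H.finite_quotient_of_finiteIndex
  refine ⟨Set.range Quotient.out, Set.finite_range _, fun g => ⟨_, ⟨(g : G ⧸ H), rfl⟩, ?_⟩⟩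
  rw [← QuotientGroup.eq]
  exact QuotientGroup.out_eq' _

end

theorem bcw_finite_extension_general {G : Type*} [Group G] (H : Subgroup G) [H.FiniteIndex]
    (S : Set G) (hSfin : S.Finite) (NH : ℕ)
    (hHbcw : ∀ h ∈ H, ∃ l : List G, l.length ≤ NH ∧
      (∀ y ∈ l, ∃ x ∈ S, ∃ t : G, y = t⁻¹ * x * t ∨ y = t⁻¹ * x⁻¹ * t) ∧
      h = l.prod)
    (X : Set G) (hXgen : Subgroup.closure X = ⊤) :
    ∃ N : ℕ, ∀ g : G, ∃ l : List G, l.length ≤ N ∧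
      (∀ y ∈ l, ∃ x ∈ X, ∃ t : G, y = t⁻¹ * x * t ∨ y = t⁻¹ * x⁻¹ * t) ∧
      g = l.prod := by
  simp only [← mem_conjugatesOfSet_union_inv] at hHbcw ⊢
  set C := conjugatesOfSet (X ∪ X⁻¹)
  have hCinv : ∀ c ∈ C, c⁻¹ ∈ C := fun _ => inv_mem_conjugatesOfSet_union_inv
  have hCconj : ∀ c ∈ C, ∀ t : G, t * c * t⁻¹ ∈ C := fun _ hc _ => conj_mem_conjugatesOfSet hc
  have hCgen : Subgroup.closure C = ⊤ :=
    top_le_iff.1 <| hXgen ▸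
      Subgroup.closure_mono (Set.subset_union_left.trans subset_conjugatesOfSet)
  obtain ⟨T, hTfin, hT⟩ := H.exists_finite_forall_exists_inv_mul_mem
  obtain ⟨M, hM⟩ := exists_isProdOfAtMost_of_finite (hSfin.union hTfin) fun t _ =>
    exists_isProdOfAtMost_of_mem_closure hCinv (hCgen ▸ Subgroup.mem_top t)
  have hH : ∀ h ∈ H, IsProdOfAtMost C (NH * M) h := fun h hh =>
    IsProdOfAtMost.trans (hHbcw h hh) fun _ =>
      .of_mem_conjugatesOfSet_union_inv hCinv hCconj fun s hs => hM s (.inl hs)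
  refine ⟨M + NH * M, fun g => ?_⟩
  obtain ⟨t, htT, htg⟩ := hT g
  have hg := (hM t (.inr htT)).mul (hH _ htg)
  rwa [mul_inv_cancel_left] at hg

/-- Bounded conjugacy width passes to finite extensions: if a finite index subgroup `H` of a
finitely generated group `G` has bounded conjugacy width (conjugation taken in `G`), then `G`
has bounded conjugacy width with respect to any finite generating set `X`. -/
theorem bcw_finite_extension {G : Type*} [Group G] (H : Subgroup G) [H.FiniteIndex]
    (S : Set G) (hSfin : S.Finite) (hSH : S ⊆ (H : Set G))
    (hSgen : Subgroup.closure S = H) (NH : ℕ)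
    (hHbcw : ∀ h ∈ H, ∃ l : List G, l.length ≤ NH ∧
      (∀ y ∈ l, ∃ x ∈ S, ∃ t : G, y = t⁻¹ * x * t ∨ y = t⁻¹ * x⁻¹ * t) ∧
      h = l.prod)
    (X : Set G) (hXfin : X.Finite) (hXgen : Subgroup.closure X = ⊤) :
    ∃ N : ℕ, ∀ g : G, ∃ l : List G, l.length ≤ N ∧
      (∀ y ∈ l, ∃ x ∈ X, ∃ t : G, y = t⁻¹ * x * t ∨ y = t⁻¹ * x⁻¹ * t) ∧
      g = l.prod :=
  bcw_finite_extension_general H S hSfin NH hHbcw X hXgen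
end
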